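/- Let Γ be a real n×n matrix whose symmetric part is positive definite, let Σ be an invertible real n×n matrix, let L be a real n×d matrix, and let m ∈ ℝⁿ. Define the quasi-Gaussian response operator R = (∫₀^∞ exp(−sΓ) Σ ds) Σ⁻¹ and the stationary mean map z̄(x) = m + Γ⁻¹ L x. Then R = Γ⁻¹, and consequently for all x, x* ∈ ℝᵈ one has z̄(x) − z̄(x*) = R L (x − x*); that is, the quasi-Gaussian linear response formula recovers the exact change of the stationary mean for perturbations x − x* of arbitrary size. -/

import Mathlib

/-! Since the symmetric part of `Γ` is positive definite, compactness of the unit sphere gives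
`c > 0` with `c |v|² ≤ ⟨v, Γ v⟩`. Hence `t ↦ |exp (-tΓ) v|²` has derivative at most `-2c` times
itself, and Grönwall's inequality gives `|exp (-tΓ) v| ≤ exp (-ct) |v|`. So `exp (-tΓ)` is
integrable on `[0, ∞)` and tends to `0`; as `-Γ⁻¹ exp (-tΓ)` is an antiderivative of it,
`∫₀^∞ exp (-sΓ) ds = Γ⁻¹`, whence `R = Γ⁻¹ Σ Σ⁻¹ = Γ⁻¹`. The mean map is affine with linear part
`Γ⁻¹ L`, so the response formula is exact at every distance. -/

open Matrix MeasureTheory NormedSpace Filter Topology Set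

attribute [local instance] Matrix.normedAddCommGroup Matrix.normedSpace

theorem HasDerivAt.dotProduct {𝕜 ι : Type*} [NontriviallyNormedField 𝕜] [Fintype ι]
    {f g : 𝕜 → ι → 𝕜} {f' g' : ι → 𝕜} {t : 𝕜}
    (hf : HasDerivAt f f' t) (hg : HasDerivAt g g' t) :
    HasDerivAt (fun s => f s ⬝ᵥ g s) (f' ⬝ᵥ g t + f t ⬝ᵥ g') t := by
  have := HasDerivAt.fun_sum (u := Finset.univ)
    fun i _ => (hasDerivAt_pi.1 hf i).fun_mul (hasDerivAt_pi.1 hg i)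
  refine this.congr_deriv ?_
  rw [Finset.sum_add_distrib]
  rfl

namespace Matrix

variable {ι : Type*} [Fintype ι]

theorem dotProduct_self_pos {v : ι → ℝ} (hv : v ≠ 0) : 0 < v ⬝ᵥ v := by
  simpa using dotProduct_self_star_pos_iff.2 hv

theorem exists_pos_mul_dotProduct_self_le {A : Matrix ι ι ℝ}
    (hA : ∀ v : ι → ℝ, v ≠ 0 → 0 < v ⬝ᵥ A *ᵥ v) :
    ∃ c > 0, ∀ v : ι → ℝ, c * (v ⬝ᵥ v) ≤ v ⬝ᵥ A *ᵥ v := by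
  set ρ : (ι → ℝ) → ℝ := fun v => (v ⬝ᵥ A *ᵥ v) / (v ⬝ᵥ v)
  have hρ_smul (v : ι → ℝ) {a : ℝ} (ha : a ≠ 0) : ρ (a • v) = ρ v := by
    simp only [ρ, mulVec_smul, smul_dotProduct, dotProduct_smul, smul_eq_mul,
      mul_div_mul_left _ _ ha]
  have hmem {v : ι → ℝ} (hv : v ≠ 0) : ‖v‖⁻¹ • v ∈ Metric.sphere (0 : ι → ℝ) 1 := by
    simp [norm_smul, hv]
  rcases (Metric.sphere (0 : ι → ℝ) 1).eq_empty_or_nonempty with hK | hK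
  · refine ⟨1, one_pos, fun v => ?_⟩
    obtain rfl : v = 0 := by
      by_contra hv
      simpa [hK] using hmem hv
    simp
  have hρ_cont : ContinuousOn ρ (Metric.sphere 0 1) := by
    refine ContinuousOn.div (by fun_prop) (by fun_prop) fun v hv => ?_
    exact (dotProduct_self_pos (ne_zero_of_mem_unit_sphere ⟨v, hv⟩)).ne'
  obtain ⟨v₀, hv₀, hmin⟩ := (isCompact_sphere 0 1).exists_isMinOn hK hρ_cont
  have hv₀0 : v₀ ≠ 0 := ne_zero_of_mem_unit_sphere ⟨v₀, hv₀⟩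
  refine ⟨ρ v₀, div_pos (hA v₀ hv₀0) (dotProduct_self_pos hv₀0), fun v => ?_⟩
  rcases eq_or_ne v 0 with rfl | hv
  · simp
  have h : ρ v₀ ≤ ρ v := by
    simpa [hρ_smul v (inv_ne_zero (norm_ne_zero_iff.2 hv))] using hmin (hmem hv)
  exact (le_div_iff₀ (dotProduct_self_pos hv)).1 h

theorem isUnit_det_of_dotProduct_mulVec_pos [DecidableEq ι] {A : Matrix ι ι ℝ}
    (hA : ∀ v : ι → ℝ, v ≠ 0 → 0 < v ⬝ᵥ A *ᵥ v) : IsUnit A.det := by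
  refine isUnit_iff_ne_zero.2 fun h => ?_
  obtain ⟨v, hv, hAv⟩ := exists_mulVec_eq_zero_iff.2 h
  simpa [hAv] using hA v hv

variable [DecidableEq ι]

-- Differentiability is a topological notion, so the operator norm may be borrowed here.
theorem hasDerivAt_exp_neg_smul (A : Matrix ι ι ℝ) (t : ℝ) :
    HasDerivAt (fun s : ℝ => exp (-(s • A))) (-(A * exp (-(t • A)))) t := by
  open scoped Norms.Operator in
  have h := hasDerivAt_exp_smul_const' (𝕂 := ℝ) (-A) t
  simp only [smul_neg, neg_mul] at h
  exact h

theorem hasDerivAt_exp_neg_smul_mulVec (A : Matrix ι ι ℝ) (v : ι → ℝ) (t : ℝ) :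
    HasDerivAt (fun s : ℝ => exp (-(s • A)) *ᵥ v) (-(A *ᵥ (exp (-(t • A)) *ᵥ v))) t := by
  have h := (LinearMap.toContinuousLinearMap ((mulVecBilin ℝ ℝ).flip v)).hasFDerivAt
    |>.comp_hasDerivAt t (hasDerivAt_exp_neg_smul A t)
  refine h.congr_deriv ?_
  change (-(A * exp (-(t • A)))) *ᵥ v = _
  rw [neg_mulVec, mulVec_mulVec]

theorem dotProduct_self_exp_neg_smul_mulVec_le {A : Matrix ι ι ℝ} {c : ℝ}
    (hc : ∀ v : ι → ℝ, c * (v ⬝ᵥ v) ≤ v ⬝ᵥ A *ᵥ v) (v : ι → ℝ) {t : ℝ} (ht : 0 ≤ t) :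
    (exp (-(t • A)) *ᵥ v) ⬝ᵥ (exp (-(t • A)) *ᵥ v) ≤ Real.exp (-(2 * c) * t) * (v ⬝ᵥ v) := by
  set w : ℝ → ι → ℝ := fun s => exp (-(s • A)) *ᵥ v
  have hq (s : ℝ) : HasDerivAt (fun s => w s ⬝ᵥ w s) (-(2 * (w s ⬝ᵥ A *ᵥ w s))) s := by
    have h := (hasDerivAt_exp_neg_smul_mulVec A v s).dotProduct
      (hasDerivAt_exp_neg_smul_mulVec A v s)
    refine h.congr_deriv ?_
    rw [neg_dotProduct, dotProduct_neg, dotProduct_comm]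
    ring
  have h := le_gronwallBound_of_liminf_deriv_right_le
    (δ := v ⬝ᵥ v) (K := -(2 * c)) (ε := 0) (a := 0) (b := t)
    (fun s _ => (hq s).continuousAt.continuousWithinAt)
    (fun s _ r hr => (hq s).hasDerivWithinAt.liminf_right_slope_le hr)
    (by simp [w]) (fun s _ => by linarith [hc (w s)]) t ⟨ht, le_rfl⟩
  simpa [gronwallBound_ε0, w, mul_comm] using h

theorem norm_exp_neg_smul_le {A : Matrix ι ι ℝ} {c : ℝ}
    (hc : ∀ v : ι → ℝ, c * (v ⬝ᵥ v) ≤ v ⬝ᵥ A *ᵥ v) {t : ℝ} (ht : 0 ≤ t) :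
    ‖exp (-(t • A))‖ ≤ Real.exp (-c * t) := by
  set E := exp (-(t • A))
  refine (norm_le_iff (Real.exp_pos _).le).2 fun i j => ?_
  have hcol := dotProduct_self_exp_neg_smul_mulVec_le hc (Pi.single j 1) ht
  have hsq : E i j ^ 2 ≤ Real.exp (-c * t) ^ 2 :=
    calc E i j ^ 2 ≤ ∑ k, E k j * E k j :=
          sq (E i j) ▸ Finset.single_le_sum (fun k _ => mul_self_nonneg (E k j))
            (Finset.mem_univ i)
      _ ≤ Real.exp (-(2 * c) * t) := by
          simpa [dotProduct, mulVec_single_one, Pi.single_apply] using hcol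
      _ = Real.exp (-c * t) ^ 2 := by rw [sq, ← Real.exp_add]; ring_nf
  simpa [Real.norm_eq_abs] using abs_le_of_sq_le_sq hsq (Real.exp_pos _).le

/- The Pi topology on matrices is not reducibly the one of `Matrix.normedAddCommGroup`; these
instances let `IntegrableOn` and `AEStronglyMeasurable` elaborate for matrix-valued functions. -/
instance {m n α : Type*} [Fintype m] [Fintype n] [NormedAddCommGroup α] :
    ContinuousENorm (Matrix m n α) :=
  inferInstanceAs (ContinuousENorm (m → n → α))

instance {m n α : Type*} [Fintype m] [Fintype n] [TopologicalSpace α]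
    [TopologicalSpace.PseudoMetrizableSpace α] :
    TopologicalSpace.PseudoMetrizableSpace (Matrix m n α) :=
  inferInstanceAs (TopologicalSpace.PseudoMetrizableSpace (m → n → α))

theorem continuous_exp_neg_smul (A : Matrix ι ι ℝ) : Continuous fun s : ℝ => exp (-(s • A)) :=
  continuous_iff_continuousAt.2 fun t => (hasDerivAt_exp_neg_smul A t).continuousAt

theorem integrableOn_exp_neg_smul {A : Matrix ι ι ℝ}
    (hA : ∀ v : ι → ℝ, v ≠ 0 → 0 < v ⬝ᵥ A *ᵥ v) :
    IntegrableOn (fun s : ℝ => exp (-(s • A))) (Ioi 0) := by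
  obtain ⟨c, hc0, hc⟩ := exists_pos_mul_dotProduct_self_le hA
  refine Integrable.mono' (exp_neg_integrableOn_Ioi 0 hc0)
    (continuous_exp_neg_smul A).aestronglyMeasurable ?_
  filter_upwards [ae_restrict_mem measurableSet_Ioi] with s hs
  exact norm_exp_neg_smul_le hc (le_of_lt hs)

theorem tendsto_exp_neg_smul_atTop {A : Matrix ι ι ℝ}
    (hA : ∀ v : ι → ℝ, v ≠ 0 → 0 < v ⬝ᵥ A *ᵥ v) :
    Tendsto (fun s : ℝ => exp (-(s • A))) atTop (𝓝 0) := by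
  obtain ⟨c, hc0, hc⟩ := exists_pos_mul_dotProduct_self_le hA
  refine squeeze_zero_norm' (a := fun s => Real.exp (-c * s)) ?_ ?_
  · filter_upwards [eventually_ge_atTop 0] with s hs using norm_exp_neg_smul_le hc hs
  · simp only [neg_mul]
    exact Real.tendsto_exp_neg_atTop_nhds_zero.comp (tendsto_id.const_mul_atTop hc0)

theorem integral_exp_neg_smul {A : Matrix ι ι ℝ}
    (hA : ∀ v : ι → ℝ, v ≠ 0 → 0 < v ⬝ᵥ A *ᵥ v) :
    ∫ s in Ioi (0 : ℝ), exp (-(s • A)) = A⁻¹ := by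
  have hderiv (s : ℝ) :
      HasDerivAt (fun s : ℝ => -(A⁻¹ * exp (-(s • A)))) (exp (-(s • A))) s := by
    open scoped Norms.Operator in
    have h := ((hasDerivAt_exp_neg_smul A s).const_mul A⁻¹).neg
    refine h.congr_deriv ?_
    rw [mul_neg, neg_neg, ← Matrix.mul_assoc,
      nonsing_inv_mul _ (isUnit_det_of_dotProduct_mulVec_pos hA), Matrix.one_mul]
  have hlim : Tendsto (fun s : ℝ => -(A⁻¹ * exp (-(s • A)))) atTop (𝓝 0) := by
    simpa using ((tendsto_exp_neg_smul_atTop hA).const_mul A⁻¹).neg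
  simpa using integral_Ioi_of_hasDerivAt_of_tendsto' (fun s _ => hderiv s)
    (integrableOn_exp_neg_smul hA) hlim

theorem integral_mul_const {α : Type*} [MeasurableSpace α] {μ : Measure α}
    {f : α → Matrix ι ι ℝ} (hf : Integrable f μ) (B : Matrix ι ι ℝ) :
    ∫ a, f a * B ∂μ = (∫ a, f a ∂μ) * B :=
  (LinearMap.toContinuousLinearMap (LinearMap.mulRight ℝ B)).integral_comp_comm hf

end Matrix

/-- Let `Γ` be a real `n × n` matrix with positive-definite symmetric part,
`S` an invertible `n × n` matrix (the stationary covariance), `L` an `n × d` matrix and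
`m ∈ ℝⁿ`. The quasi-Gaussian response operator `R = (∫₀^∞ exp (-sΓ) S ds) S⁻¹` equals `Γ⁻¹`,
and consequently the stationary mean map `z̄(x) = m + Γ⁻¹ L x` satisfies
`z̄(x) - z̄(x*) = R L (x - x*)` for all `x, x*` of arbitrary distance. -/
theorem stmt_4 (n d : ℕ) (Γ S : Matrix (Fin n) (Fin n) ℝ)
    (hΓ : ∀ v : Fin n → ℝ, v ≠ 0 → 0 < v ⬝ᵥ Γ.mulVec v)
    (hS : IsUnit S.det)
    (L : Matrix (Fin n) (Fin d) ℝ) (m : Fin n → ℝ)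
    (R : Matrix (Fin n) (Fin n) ℝ)
    (hR : R = (∫ s in Set.Ici (0 : ℝ), NormedSpace.exp (-(s • Γ)) * S) * S⁻¹)
    (zbar : (Fin d → ℝ) → (Fin n → ℝ))
    (hzbar : ∀ x, zbar x = m + (Γ⁻¹ * L).mulVec x) :
    R = Γ⁻¹ ∧
    ∀ x xstar : Fin d → ℝ, zbar x - zbar xstar = (R * L).mulVec (x - xstar) := by
  have hR_eq : R = Γ⁻¹ := by
    rw [hR, integral_Ici_eq_integral_Ioi,
      Matrix.integral_mul_const (integrableOn_exp_neg_smul hΓ) S,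
      integral_exp_neg_smul hΓ, mul_nonsing_inv_cancel_right _ _ hS]
  refine ⟨hR_eq, fun x xstar => ?_⟩
  rw [hzbar, hzbar, hR_eq, mulVec_sub]
  abel
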